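/- Let m ≥ 2, F = GF(2^{m+2}) with irreducible polynomial x^{m+2}+x+1, and R the set of polynomials over GF(2) of degree at most m−2. Let D₁ be the 2^{m+2} × 4 matrix with entry f·g for row f ∈ F and column g ∈ {0, 1, x, x+1}. Then (i) D₁ is a difference matrix D(2^{m+2}, 4, 2^{m+2}) over F; (ii) letting D₂ be the submatrix with rows indexed by R ∪ (x^{m+1}+x^m+x^{m-1}+R) and φ : F → GF(2^m) the truncation map keeping only terms of degree < m, the matrix φ(D₂) is a difference matrix D(2^m, 4, 2^m) over GF(2^m). -/

import Mathlib

/-!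
A column difference g - g' is one of d = 1, X, X + 1, and reduction mod p and the truncation φ
are additive, so each part says that f ↦ φ(f d mod p) maps the rows bijectively onto the
target. Everything is finite, so it suffices to have an injection back and injectivity, i.e. a
trivial kernel. In (i) the kernel is trivial because p is prime and does not divide d. In (ii) the
rows form a group (characteristic 2); for a row r of degree ≤ m - 2 the product r d passes through
both reductions unchanged, and for a shifted row c + r the explicit value of φ(c d) leaves a
nonzero coefficient of X^{m-1}, a nonzero constant term, resp. a nonzero value at 1
(for d = 1, X, X + 1). The injection back is g ↦ g + g_{m-1} (X^{m+1} + X^m).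
-/

open Polynomial

theorem Set.BijOn.existsUnique_mem {α β : Type*} {f : α → β} {s : Set α} {t : Set β}
    (h : BijOn f s t) {b : β} (hb : b ∈ t) : ∃! a, a ∈ s ∧ f a = b := by
  obtain ⟨a, ha, rfl⟩ := h.surjOn hb
  exact ⟨a, ⟨ha, rfl⟩, fun x ⟨hx, hfx⟩ => h.injOn hx ha hfx⟩

theorem Set.Finite.bijOn_of_injOn_of_injOn {α β : Type*} {f : α → β} {g : β → α} {s : Set α}
    {t : Set β} (ht : t.Finite) (hf : MapsTo f s t) (hf' : InjOn f s) (hg : MapsTo g t s)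
    (hg' : InjOn g t) : BijOn f s t := by
  have hfg : BijOn (f ∘ g) t t :=
    (ht.injOn_iff_bijOn_of_mapsTo (hf.comp hg)).mp (hf'.comp hg' hg)
  refine ⟨hf, hf', fun b hb => ?_⟩
  obtain ⟨a, ha, rfl⟩ := hfg.surjOn hb
  exact ⟨g a, hg ha, rfl⟩

namespace Polynomial

theorem finite_setOf_natDegree_lt {R : Type*} [Semiring R] [Finite R] (n : ℕ) :
    {p : R[X] | p.natDegree < n}.Finite := by
  refine (Set.finite_range fun c : Fin n → R => ∑ i : Fin n, monomial i (c i)).subset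
    fun p hp => ⟨fun i => p.coeff i, ?_⟩
  exact (Fin.sum_univ_eq_sum_range (fun i => monomial i (p.coeff i)) n).trans
    (as_sum_range' p n hp).symm

theorem modByMonic_eq_of_dvd_sub_of_natDegree_lt {R : Type*} [CommRing R] [Nontrivial R]
    {p q r : R[X]} (hq : q.Monic) (h : q ∣ p - r) (hr : r.natDegree < q.natDegree) :
    p %ₘ q = r := by
  rw [modByMonic_eq_of_dvd_sub hq h, (modByMonic_eq_self_iff hq).2 (degree_lt_degree hr)]

theorem injOn_mul_modByMonic {K : Type*} [Field K] {p d : K[X]} (hp : p.Monic)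
    (hirr : Irreducible p) (hd : ¬p ∣ d) :
    Set.InjOn (fun f => (f * d) %ₘ p) {f | f.natDegree < p.natDegree} := by
  intro f₁ hf₁ f₂ hf₂ h
  have hdvd : p ∣ (f₁ - f₂) * d := by
    rw [← modByMonic_eq_zero_iff_dvd hp, sub_mul, sub_modByMonic]
    exact sub_eq_zero.mpr h
  have hdvd' : p ∣ f₁ - f₂ := (hirr.prime.dvd_or_dvd hdvd).resolve_right hd
  exact sub_eq_zero.mp (eq_zero_of_dvd_of_natDegree_lt hdvd'
    ((natDegree_sub_le _ _).trans_lt (max_lt hf₁ hf₂)))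

theorem existsUnique_mul_modByMonic_eq {K : Type*} [Field K] [Finite K] {p d h : K[X]}
    (hp : p.Monic) (hirr : Irreducible p) (hd : ¬p ∣ d) (hh : h.natDegree < p.natDegree) :
    ∃! f, f.natDegree < p.natDegree ∧ (f * d) %ₘ p = h := by
  have hmaps : Set.MapsTo (fun f => (f * d) %ₘ p) {f | f.natDegree < p.natDegree}
      {f | f.natDegree < p.natDegree} := fun f _ => natDegree_modByMonic_lt _ hp hirr.ne_one
  exact (((finite_setOf_natDegree_lt _).injOn_iff_bijOn_of_mapsTo hmaps).mp
    (injOn_mul_modByMonic hp hirr hd)).existsUnique_mem hh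

end Polynomial

def columnDiffs : Set (ZMod 2)[X] := {1, X, X + 1}

theorem sub_mem_columnDiffs {g g' : (ZMod 2)[X]}
    (hg : g ∈ ({0, 1, X, X + 1} : Set (ZMod 2)[X]))
    (hg' : g' ∈ ({0, 1, X, X + 1} : Set (ZMod 2)[X])) (hne : g ≠ g') :
    g - g' ∈ columnDiffs := by
  simp only [Set.mem_insert_iff, Set.mem_singleton_iff] at hg hg'
  rcases hg with rfl | rfl | rfl | rfl <;> rcases hg' with rfl | rfl | rfl | rfl <;>
    first
    | exact absurd rfl hne
    | (simp only [columnDiffs, Set.mem_insert_iff, Set.mem_singleton_iff]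
       ring_nf; reduce_mod_char; simp)

theorem ne_zero_of_mem_columnDiffs {d : (ZMod 2)[X]} (hd : d ∈ columnDiffs) : d ≠ 0 := by
  rcases hd with rfl | rfl | rfl
  · exact one_ne_zero
  · exact X_ne_zero
  · simpa using X_add_C_ne_zero (1 : ZMod 2)

theorem natDegree_le_one_of_mem_columnDiffs {d : (ZMod 2)[X]} (hd : d ∈ columnDiffs) :
    d.natDegree ≤ 1 := by
  rcases hd with rfl | rfl | rfl <;> compute_degree!

noncomputable section Truncation

/- With m = n + 2: p = X^(n+4) + X + 1, `rowSet n` is the row set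
R ∪ (x^{m+1} + x^m + x^{m-1} + R) of D₂, and `truncMul n d f = φ(f d mod p)`. -/

variable (n : ℕ)

def rowShift : (ZMod 2)[X] := X ^ (n + 3) + X ^ (n + 2) + X ^ (n + 1)

def rowSet : Set (ZMod 2)[X] :=
  {f | f.natDegree ≤ n ∨ ∃ r : (ZMod 2)[X], r.natDegree ≤ n ∧ f = rowShift n + r}

def truncMul (d f : (ZMod 2)[X]) : (ZMod 2)[X] :=
  ((f * d) %ₘ (X ^ (n + 4) + X + 1)) %ₘ X ^ (n + 2)

def rowLift (g : (ZMod 2)[X]) : (ZMod 2)[X] :=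
  g + C (g.coeff (n + 1)) * (X ^ (n + 3) + X ^ (n + 2))

variable {n}

theorem monic_trinomial : (X ^ (n + 4) + X + 1 : (ZMod 2)[X]).Monic := by
  monicity!

theorem natDegree_trinomial : (X ^ (n + 4) + X + 1 : (ZMod 2)[X]).natDegree = n + 4 := by
  compute_degree!

theorem truncMul_add (d f₁ f₂ : (ZMod 2)[X]) :
    truncMul n d (f₁ + f₂) = truncMul n d f₁ + truncMul n d f₂ := by
  simp only [truncMul, add_mul, add_modByMonic]

theorem truncMul_sub (d f₁ f₂ : (ZMod 2)[X]) :
    truncMul n d (f₁ - f₂) = truncMul n d f₁ - truncMul n d f₂ := by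
  simp only [truncMul, sub_mul, sub_modByMonic]

theorem truncMul_of_natDegree_le {d r : (ZMod 2)[X]} (hd : d.natDegree ≤ 1)
    (hr : r.natDegree ≤ n) : truncMul n d r = r * d := by
  have hrd : (r * d).natDegree ≤ n + 1 := natDegree_mul_le_of_le hr hd
  rw [truncMul, (modByMonic_eq_self_iff monic_trinomial).2
      (degree_lt_degree (by rw [natDegree_trinomial]; omega)),
    (modByMonic_eq_self_iff (monic_X_pow _)).2
      (degree_lt_degree (by rw [natDegree_X_pow]; omega))]

theorem truncMul_one_rowShift : truncMul n 1 (rowShift n) = X ^ (n + 1) := by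
  have h₁ : rowShift n %ₘ (X ^ (n + 4) + X + 1) = rowShift n :=
    modByMonic_eq_of_dvd_sub_of_natDegree_lt monic_trinomial (by simp)
      (by rw [natDegree_trinomial, rowShift]; compute_degree!)
  have h₂ : rowShift n %ₘ X ^ (n + 2) = X ^ (n + 1) :=
    modByMonic_eq_of_dvd_sub_of_natDegree_lt (monic_X_pow _) ⟨X + 1, by rw [rowShift]; ring⟩
      (by simp only [natDegree_X_pow]; omega)
  rw [truncMul, mul_one, h₁, h₂]

theorem truncMul_X_rowShift : truncMul n X (rowShift n) = X + 1 := by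
  have h₁ : (rowShift n * X) %ₘ (X ^ (n + 4) + X + 1) = X ^ (n + 3) + X ^ (n + 2) + (X + 1) :=
    modByMonic_eq_of_dvd_sub_of_natDegree_lt monic_trinomial
      ⟨1, by
        rw [rowShift]
        linear_combination (-X - 1) * CharTwo.two_eq_zero (R := (ZMod 2)[X])⟩
      (by rw [natDegree_trinomial]; compute_degree!)
  have h₂ : (X ^ (n + 3) + X ^ (n + 2) + (X + 1) : (ZMod 2)[X]) %ₘ X ^ (n + 2) = X + 1 :=
    modByMonic_eq_of_dvd_sub_of_natDegree_lt (monic_X_pow _) ⟨X + 1, by ring⟩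
      (by rw [natDegree_X_pow]; compute_degree!)
  rw [truncMul, h₁, h₂]

theorem truncMul_X_add_one_rowShift :
    truncMul n (X + 1) (rowShift n) = X ^ (n + 1) + X + 1 := by
  have h₁ : (rowShift n * (X + 1)) %ₘ (X ^ (n + 4) + X + 1) = X ^ (n + 1) + X + 1 :=
    modByMonic_eq_of_dvd_sub_of_natDegree_lt monic_trinomial
      ⟨1, by
        rw [rowShift]
        linear_combination
          (X ^ (n + 3) + X ^ (n + 2) - X - 1) * CharTwo.two_eq_zero (R := (ZMod 2)[X])⟩
      (by rw [natDegree_trinomial]; compute_degree!)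
  have h₂ : (X ^ (n + 1) + X + 1 : (ZMod 2)[X]) %ₘ X ^ (n + 2) = X ^ (n + 1) + X + 1 :=
    modByMonic_eq_of_dvd_sub_of_natDegree_lt (monic_X_pow _) (by simp)
      (by rw [natDegree_X_pow]; compute_degree!)
  rw [truncMul, h₁, h₂]

theorem truncMul_rowShift_add_ne_zero {d r : (ZMod 2)[X]} (hd : d ∈ columnDiffs)
    (hr : r.natDegree ≤ n) : truncMul n d (rowShift n + r) ≠ 0 := by
  rw [truncMul_add, truncMul_of_natDegree_le (natDegree_le_one_of_mem_columnDiffs hd) hr]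
  have hr' : r.coeff (n + 1) = 0 := coeff_eq_zero_of_natDegree_lt (by omega)
  intro h
  rcases hd with rfl | rfl | rfl
  · simpa [truncMul_one_rowShift, hr'] using congrArg (coeff · (n + 1)) h
  · simpa [truncMul_X_rowShift] using congrArg (coeff · 0) h
  · have := congrArg (eval 1) h
    simp only [truncMul_X_add_one_rowShift, eval_add, eval_mul, eval_pow, eval_X, eval_one,
      one_pow, eval_zero] at this
    reduce_mod_char at this
    exact one_ne_zero this

theorem sub_mem_rowSet {f₁ f₂ : (ZMod 2)[X]} (hf₁ : f₁ ∈ rowSet n) (hf₂ : f₂ ∈ rowSet n) :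
    f₁ - f₂ ∈ rowSet n := by
  have hsub {r₁ r₂ : (ZMod 2)[X]} (h₁ : r₁.natDegree ≤ n) (h₂ : r₂.natDegree ≤ n) :
      (r₁ - r₂).natDegree ≤ n := (natDegree_sub_le _ _).trans (max_le h₁ h₂)
  rcases hf₁ with h₁ | ⟨r₁, h₁, rfl⟩ <;> rcases hf₂ with h₂ | ⟨r₂, h₂, rfl⟩
  · exact Or.inl (hsub h₁ h₂)
  · refine Or.inr ⟨f₁ - r₂, hsub h₁ h₂, ?_⟩
    linear_combination (-rowShift n) * CharTwo.two_eq_zero (R := (ZMod 2)[X])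
  · exact Or.inr ⟨r₁ - f₂, hsub h₁ h₂, by ring⟩
  · exact Or.inl (by simpa using hsub h₁ h₂)

theorem eq_zero_of_truncMul_eq_zero {d f : (ZMod 2)[X]} (hd : d ∈ columnDiffs)
    (hf : f ∈ rowSet n) (h : truncMul n d f = 0) : f = 0 := by
  rcases hf with hf | ⟨r, hr, rfl⟩
  · rw [truncMul_of_natDegree_le (natDegree_le_one_of_mem_columnDiffs hd) hf] at h
    exact (mul_eq_zero.mp h).resolve_right (ne_zero_of_mem_columnDiffs hd)
  · exact absurd h (truncMul_rowShift_add_ne_zero hd hr)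

theorem injOn_truncMul {d : (ZMod 2)[X]} (hd : d ∈ columnDiffs) :
    Set.InjOn (truncMul n d) (rowSet n) := fun f₁ hf₁ f₂ hf₂ h =>
  sub_eq_zero.mp (eq_zero_of_truncMul_eq_zero hd (sub_mem_rowSet hf₁ hf₂)
    (by rw [truncMul_sub, h, sub_self]))

theorem rowLift_modByMonic {g : (ZMod 2)[X]} (hg : g.natDegree < n + 2) :
    rowLift n g %ₘ X ^ (n + 2) = g :=
  modByMonic_eq_of_dvd_sub_of_natDegree_lt (monic_X_pow _)
    ⟨C (g.coeff (n + 1)) * (X + 1), by rw [rowLift]; ring⟩ (by rwa [natDegree_X_pow])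

theorem mapsTo_rowLift : Set.MapsTo (rowLift n) {g | g.natDegree < n + 2} (rowSet n) := by
  intro g hg
  have hle {q : (ZMod 2)[X]} (hq : q.natDegree ≤ n + 1) (h : q.coeff (n + 1) = 0) :
      q.natDegree ≤ n := by simpa using natDegree_le_pred hq h
  rcases (by decide : ∀ a : ZMod 2, a = 0 ∨ a = 1) (g.coeff (n + 1)) with h | h
  · left
    rw [rowLift, h, map_zero, zero_mul, add_zero]
    exact hle (Nat.le_of_lt_succ hg) h
  · refine Or.inr ⟨g - X ^ (n + 1), hle ?_ ?_, ?_⟩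
    · exact (natDegree_sub_le _ _).trans
        (max_le (Nat.le_of_lt_succ hg) (natDegree_X_pow_le _))
    · rw [coeff_sub, coeff_X_pow_self, h, sub_self]
    · rw [rowLift, rowShift, h, map_one]; ring

theorem existsUnique_truncMul_eq {d h : (ZMod 2)[X]} (hd : d ∈ columnDiffs)
    (hh : h.natDegree < n + 2) : ∃! f, f ∈ rowSet n ∧ truncMul n d f = h := by
  have hX : (X ^ (n + 2) : (ZMod 2)[X]) ≠ 1 := ne_of_apply_ne natDegree (by simp)
  have hmaps : Set.MapsTo (truncMul n d) (rowSet n) {g | g.natDegree < n + 2} := fun f _ =>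
    (natDegree_modByMonic_lt _ (monic_X_pow _) hX).trans_eq (natDegree_X_pow _)
  have hlift : Set.InjOn (rowLift n) {g | g.natDegree < n + 2} :=
    Set.LeftInvOn.injOn (f₁' := (· %ₘ X ^ (n + 2))) fun g hg => rowLift_modByMonic hg
  exact ((finite_setOf_natDegree_lt _).bijOn_of_injOn_of_injOn hmaps (injOn_truncMul hd)
    mapsTo_rowLift hlift).existsUnique_mem hh

end Truncation

/-- Theorem 2 of the paper. Work in F = GF(2^{m+2}) =
GF(2)[x]/(x^{m+2}+x+1), elements represented by polynomials of degree ≤ m+1.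
(i) The multiplication table with rows f ∈ F and columns g ∈ {0,1,x,x+1} is a
difference matrix D(2^{m+2}, 4, 2^{m+2}). (ii) Restricting rows to
R ∪ (x^{m+1}+x^m+x^{m-1}+R), with R the polynomials of degree ≤ m−2, and
truncating entries to degree < m (the projection φ = `%ₘ X^m` into GF(2^m)),
gives a difference matrix D(2^m, 4, 2^m). -/
theorem stmt14 (m : ℕ) (hm : 2 ≤ m)
    (p : Polynomial (ZMod 2)) (hpdef : p = X ^ (m + 2) + X + 1) (hp : Irreducible p) :
    (∀ g ∈ ({0, 1, X, X + 1} : Set (Polynomial (ZMod 2))),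
      ∀ g' ∈ ({0, 1, X, X + 1} : Set (Polynomial (ZMod 2))), g ≠ g' →
        ∀ h : Polynomial (ZMod 2), h.natDegree ≤ m + 1 →
          ∃! f : Polynomial (ZMod 2),
            f.natDegree ≤ m + 1 ∧ (f * g) %ₘ p - (f * g') %ₘ p = h)
    ∧
    (∀ g ∈ ({0, 1, X, X + 1} : Set (Polynomial (ZMod 2))),
      ∀ g' ∈ ({0, 1, X, X + 1} : Set (Polynomial (ZMod 2))), g ≠ g' →
        ∀ h : Polynomial (ZMod 2), h.natDegree ≤ m - 1 →
          ∃! f : Polynomial (ZMod 2),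
            (f.natDegree ≤ m - 2 ∨
              ∃ r : Polynomial (ZMod 2), r.natDegree ≤ m - 2 ∧
                f = X ^ (m + 1) + X ^ m + X ^ (m - 1) + r) ∧
            ((f * g) %ₘ p) %ₘ X ^ m - ((f * g') %ₘ p) %ₘ X ^ m = h) := by
  obtain ⟨n, rfl⟩ : ∃ n, m = n + 2 := ⟨m - 2, by omega⟩
  subst hpdef
  refine ⟨fun g hg g' hg' hne h hh => ?_, fun g hg g' hg' hne h hh => ?_⟩
  · have hd := sub_mem_columnDiffs hg hg' hne
    have hdvd : ¬(X ^ (n + 4) + X + 1 : (ZMod 2)[X]) ∣ g - g' :=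
      monic_trinomial.not_dvd_of_natDegree_lt (ne_zero_of_mem_columnDiffs hd)
        (by rw [natDegree_trinomial]; linarith [natDegree_le_one_of_mem_columnDiffs hd])
    have huniq := existsUnique_mul_modByMonic_eq monic_trinomial hp hdvd
      (by rw [natDegree_trinomial]; omega : h.natDegree < _)
    simpa only [natDegree_trinomial, Nat.lt_succ_iff, mul_sub, sub_modByMonic] using huniq
  · have huniq := existsUnique_truncMul_eq (sub_mem_columnDiffs hg hg' hne) (Nat.lt_succ_of_le hh)
    simp only [truncMul, mul_sub, sub_modByMonic] at huniq
    exact huniq
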